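/- Let s* be a global minimizer of M(s) = f0 + gᵀs + (1/2)sᵀHs + (β/6)‖s‖³ + (σ/4)‖s‖⁴ with σ ≥ 0 and β + 3σ‖s*‖ ≥ 0. Then there exist a positive semidefinite symmetric (n+1)×(n+1) matrix X, a polynomial p of degree ≤ 2, and a polynomial q of degree ≤ 1 such that for all s ∈ ℝⁿ, M(s) - M(s*) = (1, s)ᵀ X (1, s) + p(‖s‖)² + ‖s‖ q(‖s‖)². -/

import Mathlib

/-!
Write `B = Bmat H β σ s*`, `r = ‖s‖` and `ρ = ‖s*‖`. Then
`M s - M s* = (g + B s*) ⬝ (s - s*) + ½ (s - s*)ᵀ B (s - s*) + (r - ρ)² R(r)`,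
where `R` is a quadratic in `r` whose coefficients are nonnegative because `σ ≥ 0` and
`β + 3σρ ≥ 0`. Along `s = s* + t d` the last term is `O(t²)`, so minimality forces the gradient
`g + B s*` to vanish. On the sphere `‖s‖ = ρ` the last term vanishes too, and reflecting `s*` in
`w⟂` shows `wᵀ B w ≥ 0` whenever `s* ⬝ w ≠ 0`; by continuity (and a limit along `t • x` when
`s* = 0`) `B ⪰ 0`. Finally `R(r) = (a r + b)² + r c²`, so the remainder is
`p(r)² + r q(r)²` with `p = (X - ρ)(a X + b)`, `q = c (X - ρ)`, and the quadratic term is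
`(1, s)ᵀ Eᵀ (B / 2) E (1, s)` for the matrix `E` with `E (1, s) = s - s*`.
-/

open Matrix Polynomial

noncomputable def enormFin {n : ℕ} (s : Fin n → ℝ) : ℝ := Real.sqrt (s ⬝ᵥ s)

noncomputable def Mfun {n : ℕ} (f0 : ℝ) (g : Fin n → ℝ)
    (H : Matrix (Fin n) (Fin n) ℝ) (β σ : ℝ) (s : Fin n → ℝ) : ℝ :=
  f0 + g ⬝ᵥ s + (1/2) * (s ⬝ᵥ (H *ᵥ s)) + (β/6) * enormFin s ^ 3 + (σ/4) * enormFin s ^ 4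

noncomputable def Bmat {n : ℕ} (H : Matrix (Fin n) (Fin n) ℝ) (β σ : ℝ)
    (s : Fin n → ℝ) : Matrix (Fin n) (Fin n) ℝ :=
  H + ((β/2) * enormFin s) • (1 : Matrix (Fin n) (Fin n) ℝ)
    + (σ * enormFin s ^ 2) • (1 : Matrix (Fin n) (Fin n) ℝ)

section EuclideanNorm

variable {n : ℕ}

theorem enormFin_eq_norm (s : Fin n → ℝ) : enormFin s = ‖WithLp.toLp 2 s‖ := by
  simp only [enormFin, EuclideanSpace.norm_eq, Real.norm_eq_abs, dotProduct, sq, abs_mul_abs_self]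

theorem enormFin_nonneg (s : Fin n → ℝ) : 0 ≤ enormFin s := Real.sqrt_nonneg _

theorem enormFin_sq (s : Fin n → ℝ) : enormFin s ^ 2 = s ⬝ᵥ s :=
  Real.sq_sqrt (Finset.sum_nonneg fun i _ => mul_self_nonneg (s i))

theorem enormFin_smul (t : ℝ) (s : Fin n → ℝ) : enormFin (t • s) = |t| * enormFin s := by
  simp only [enormFin_eq_norm, WithLp.toLp_smul, norm_smul, Real.norm_eq_abs]

theorem abs_enormFin_sub_enormFin_le (a b : Fin n → ℝ) :
    |enormFin a - enormFin b| ≤ enormFin (a - b) := by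
  simpa only [enormFin_eq_norm, WithLp.toLp_sub] using abs_norm_sub_norm_le _ _

@[fun_prop]
theorem continuous_enormFin : Continuous (enormFin : (Fin n → ℝ) → ℝ) := by
  unfold enormFin
  fun_prop

end EuclideanNorm

theorem nonneg_of_forall_pos_nonneg {f : ℝ → ℝ} (hf : ContinuousWithinAt f (Set.Ioi 0) 0)
    (h : ∀ t, 0 < t → 0 ≤ f t) : 0 ≤ f 0 :=
  ge_of_tendsto hf (eventually_nhdsWithin_of_forall h)

theorem quadForm_nonneg_of_dotProduct_ne_zero {n : ℕ} {A : Matrix (Fin n) (Fin n) ℝ}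
    {v : Fin n → ℝ} (hv : v ≠ 0) (h : ∀ w, v ⬝ᵥ w ≠ 0 → 0 ≤ w ⬝ᵥ (A *ᵥ w)) (x : Fin n → ℝ) :
    0 ≤ x ⬝ᵥ (A *ᵥ x) := by
  by_cases hx : v ⬝ᵥ x = 0
  · have hcont : Continuous fun t : ℝ => (x + t • v) ⬝ᵥ (A *ᵥ (x + t • v)) := by fun_prop
    simpa using nonneg_of_forall_pos_nonneg hcont.continuousWithinAt fun t ht =>
      h _ (by simpa [dotProduct_add, hx] using ⟨ht.ne', hv⟩)
  · exact h x hx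

/-- With `r = ‖s‖` and `ρ = ‖s*‖`, the purely radial part of `M s - M s*` factors as
`σ/4 (r⁴ - ρ⁴) + β/6 (r³ - ρ³) - (β/2 ρ + σ ρ²)/2 (r² - ρ²) = (r - ρ)² * radialFactor β σ ρ r`. -/
noncomputable def radialFactor (β σ ρ r : ℝ) : ℝ :=
  σ / 4 * r ^ 2 + (β + 3 * σ * ρ) / 6 * r + ρ * (β + 3 * σ * ρ) / 12

@[fun_prop]
theorem continuous_radialFactor (β σ ρ : ℝ) : Continuous (radialFactor β σ ρ) := by
  unfold radialFactor
  fun_prop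

theorem radialFactor_nonneg {β σ ρ r : ℝ} (hσ : 0 ≤ σ) (hβ : 0 ≤ β + 3 * σ * ρ) (hρ : 0 ≤ ρ)
    (hr : 0 ≤ r) : 0 ≤ radialFactor β σ ρ r := by
  unfold radialFactor
  positivity

theorem exists_radialFactor_eq_sq_add {β σ ρ : ℝ} (hσ : 0 ≤ σ) (hβ : 0 ≤ β + 3 * σ * ρ)
    (hρ : 0 ≤ ρ) : ∃ a b c : ℝ, ∀ r, radialFactor β σ ρ r = (a * r + b) ^ 2 + r * c ^ 2 := by
  have hv : 0 ≤ ρ * (β + 3 * σ * ρ) / 12 := by positivity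
  set v := √(ρ * (β + 3 * σ * ρ) / 12)
  have hw : 0 ≤ (β + 3 * σ * ρ) / 6 + √σ * v := by positivity
  refine ⟨√σ / 2, -v, √((β + 3 * σ * ρ) / 6 + √σ * v), fun r => ?_⟩
  rw [radialFactor, Real.sq_sqrt hw]
  linear_combination (-(r ^ 2) / 4) * Real.sq_sqrt hσ - Real.sq_sqrt hv

section Minimizer

variable {n : ℕ} {f0 : ℝ} {g : Fin n → ℝ} {H : Matrix (Fin n) (Fin n) ℝ} {β σ : ℝ}
  {sstar : Fin n → ℝ}

theorem mfun_sub_mfun (hH : H.IsSymm) (s : Fin n → ℝ) :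
    Mfun f0 g H β σ s - Mfun f0 g H β σ sstar =
      (g + Bmat H β σ sstar *ᵥ sstar) ⬝ᵥ (s - sstar)
        + 1 / 2 * ((s - sstar) ⬝ᵥ (Bmat H β σ sstar *ᵥ (s - sstar)))
        + (enormFin s - enormFin sstar) ^ 2 * radialFactor β σ (enormFin sstar) (enormFin s) := by
  have hsym : sstar ⬝ᵥ (H *ᵥ s) = s ⬝ᵥ (H *ᵥ sstar) := by
    rw [dotProduct_mulVec, ← mulVec_transpose, hH.eq, dotProduct_comm]
  simp only [Mfun, Bmat, radialFactor, add_mulVec, smul_mulVec, one_mulVec, mulVec_sub,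
    dotProduct_sub, sub_dotProduct, dotProduct_add, add_dotProduct, dotProduct_smul,
    smul_dotProduct, smul_eq_mul, hsym, dotProduct_comm sstar s, dotProduct_comm (H *ᵥ sstar),
    ← enormFin_sq]
  ring

theorem mfun_add_smul_sub_mfun_le (hH : H.IsSymm) (hσ : 0 ≤ σ)
    (hβ : 0 ≤ β + 3 * σ * enormFin sstar) (d : Fin n → ℝ) {t : ℝ} (ht : 0 ≤ t) :
    Mfun f0 g H β σ (sstar + t • d) - Mfun f0 g H β σ sstar ≤
      t * ((g + Bmat H β σ sstar *ᵥ sstar) ⬝ᵥ d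
        + t * (1 / 2 * (d ⬝ᵥ (Bmat H β σ sstar *ᵥ d))
          + enormFin d ^ 2 * radialFactor β σ (enormFin sstar) (enormFin (sstar + t • d)))) := by
  have hR := radialFactor_nonneg hσ hβ (enormFin_nonneg sstar) (enormFin_nonneg (sstar + t • d))
  have hdist : (enormFin (sstar + t • d) - enormFin sstar) ^ 2 ≤ (t * enormFin d) ^ 2 := by
    have h := abs_enormFin_sub_enormFin_le (sstar + t • d) sstar
    rw [add_sub_cancel_left, enormFin_smul, abs_of_nonneg ht] at h
    exact sq_le_sq' (abs_le.mp h).1 (abs_le.mp h).2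
  rw [mfun_sub_mfun hH, add_sub_cancel_left]
  simp only [mulVec_smul, dotProduct_smul, smul_dotProduct, smul_eq_mul]
  nlinarith [mul_le_mul_of_nonneg_right hdist hR]

theorem gradient_dotProduct_add_mul_nonneg (hH : H.IsSymm) (hσ : 0 ≤ σ)
    (hmin : ∀ s, Mfun f0 g H β σ sstar ≤ Mfun f0 g H β σ s)
    (hβ : 0 ≤ β + 3 * σ * enormFin sstar) (d : Fin n → ℝ) {t : ℝ} (ht : 0 < t) :
    0 ≤ (g + Bmat H β σ sstar *ᵥ sstar) ⬝ᵥ d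
      + t * (1 / 2 * (d ⬝ᵥ (Bmat H β σ sstar *ᵥ d))
        + enormFin d ^ 2 * radialFactor β σ (enormFin sstar) (enormFin (sstar + t • d))) :=
  nonneg_of_mul_nonneg_right
    ((sub_nonneg.2 (hmin _)).trans (mfun_add_smul_sub_mfun_le hH hσ hβ d ht.le)) ht

theorem gradient_eq_zero (hH : H.IsSymm) (hσ : 0 ≤ σ)
    (hmin : ∀ s, Mfun f0 g H β σ sstar ≤ Mfun f0 g H β σ s)
    (hβ : 0 ≤ β + 3 * σ * enormFin sstar) :
    g + Bmat H β σ sstar *ᵥ sstar = 0 := by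
  set c := g + Bmat H β σ sstar *ᵥ sstar
  have h := nonneg_of_forall_pos_nonneg (by fun_prop) fun t ht =>
    gradient_dotProduct_add_mul_nonneg hH hσ hmin hβ (-c) ht
  simp only [zero_mul, add_zero, dotProduct_neg, neg_nonneg] at h
  exact dotProduct_self_eq_zero.mp (le_antisymm h (by rw [← enormFin_sq]; positivity))

theorem quadForm_bmat_nonneg_of_dotProduct_ne_zero (hH : H.IsSymm)
    (hmin : ∀ s, Mfun f0 g H β σ sstar ≤ Mfun f0 g H β σ s)
    (hc : g + Bmat H β σ sstar *ᵥ sstar = 0) {w : Fin n → ℝ} (hw : sstar ⬝ᵥ w ≠ 0) :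
    0 ≤ w ⬝ᵥ (Bmat H β σ sstar *ᵥ w) := by
  have hww : w ⬝ᵥ w ≠ 0 := fun h => hw (by rw [dotProduct_self_eq_zero.mp h, dotProduct_zero])
  -- `sstar + α • w` is the reflection of `sstar` in `w⟂`, so the radial remainder vanishes there.
  set α := -2 * (sstar ⬝ᵥ w) / (w ⬝ᵥ w)
  have hα : α ≠ 0 := div_ne_zero (mul_ne_zero (by norm_num) hw) hww
  have hnorm : enormFin (sstar + α • w) = enormFin sstar := by
    unfold enormFin
    congr 1
    simp only [dotProduct_add, add_dotProduct, dotProduct_smul, smul_dotProduct, smul_eq_mul,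
      dotProduct_comm w sstar, α]
    field_simp
    ring
  have h := sub_nonneg.2 (hmin (sstar + α • w))
  rw [mfun_sub_mfun hH, hc, zero_dotProduct, add_sub_cancel_left, hnorm, sub_self, mulVec_smul]
    at h
  simp only [dotProduct_smul, smul_dotProduct, smul_eq_mul] at h
  nlinarith [sq_pos_of_ne_zero hα]

theorem posSemidef_bmat (hH : H.IsSymm) (hσ : 0 ≤ σ)
    (hmin : ∀ s, Mfun f0 g H β σ sstar ≤ Mfun f0 g H β σ s)
    (hβ : 0 ≤ β + 3 * σ * enormFin sstar) :
    (Bmat H β σ sstar).PosSemidef := by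
  have hc := gradient_eq_zero hH hσ hmin hβ
  have hsymm : (Bmat H β σ sstar).IsSymm := (hH.add (isSymm_one.smul _)).add (isSymm_one.smul _)
  refine PosSemidef.of_dotProduct_mulVec_nonneg (isHermitian_iff_isSymm.mpr hsymm) fun x => ?_
  rw [star_trivial]
  by_cases hs : sstar = 0
  · have hpos : ∀ t : ℝ, 0 < t → 0 ≤ 1 / 2 * (x ⬝ᵥ (Bmat H β σ sstar *ᵥ x))
        + enormFin x ^ 2 * radialFactor β σ (enormFin sstar) (enormFin (sstar + t • x)) :=
      fun t ht => nonneg_of_mul_nonneg_right (by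
        simpa [hc] using gradient_dotProduct_add_mul_nonneg hH hσ hmin hβ x ht) ht
    simpa [hs, enormFin, radialFactor] using nonneg_of_forall_pos_nonneg (by fun_prop) hpos
  · exact quadForm_nonneg_of_dotProduct_ne_zero hs
      (fun w hw => quadForm_bmat_nonneg_of_dotProduct_ne_zero hH hmin hc hw) x

end Minimizer

theorem dotProduct_transpose_mul_mul_mulVec {m k R : Type*} [Fintype m] [Fintype k]
    [CommSemiring R] (E : Matrix m k R) (A : Matrix m m R) (v : k → R) :
    v ⬝ᵥ ((Eᵀ * A * E) *ᵥ v) = (E *ᵥ v) ⬝ᵥ (A *ᵥ (E *ᵥ v)) := by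
  rw [← mulVec_mulVec, ← mulVec_mulVec, dotProduct_mulVec, vecMul_transpose]

def shiftMatrix {n : ℕ} (a : Fin n → ℝ) : Matrix (Fin n) (Fin (n + 1)) ℝ :=
  of fun i => vecCons (-a i) (Pi.single i 1)

theorem shiftMatrix_mulVec_cons_one {n : ℕ} (a s : Fin n → ℝ) :
    shiftMatrix a *ᵥ (Fin.cons 1 s : Fin (n + 1) → ℝ) = s - a := by
  ext i
  change vecCons (-a i) (Pi.single i 1) ⬝ᵥ vecCons 1 s = s i - a i
  rw [cons_dotProduct_cons, single_one_dotProduct]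
  ring

theorem stmt12 {n : ℕ} (f0 : ℝ) (g : Fin n → ℝ) (H : Matrix (Fin n) (Fin n) ℝ)
    (hH : H.IsSymm) (β σ : ℝ) (hσ : 0 ≤ σ) (sstar : Fin n → ℝ)
    (hmin : ∀ s : Fin n → ℝ, Mfun f0 g H β σ sstar ≤ Mfun f0 g H β σ s)
    (hβ : 0 ≤ β + 3 * σ * enormFin sstar) :
    ∃ (X : Matrix (Fin (n+1)) (Fin (n+1)) ℝ) (p q : Polynomial ℝ),
      X.IsSymm ∧ X.PosSemidef ∧ p.degree ≤ 2 ∧ q.degree ≤ 1 ∧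
      ∀ s : Fin n → ℝ,
        Mfun f0 g H β σ s - Mfun f0 g H β σ sstar =
          (Fin.cons 1 s) ⬝ᵥ (X *ᵥ (Fin.cons 1 s))
            + (p.eval (enormFin s))^2 + enormFin s * (q.eval (enormFin s))^2 := by
  set ρ := enormFin sstar
  set E := shiftMatrix sstar
  obtain ⟨a, b, c, hR⟩ := exists_radialFactor_eq_sq_add hσ hβ (enormFin_nonneg sstar)
  have hX : (Eᵀ * ((1 / 2 : ℝ) • Bmat H β σ sstar) * E).PosSemidef := by
    simpa only [conjTranspose_eq_transpose_of_trivial] using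
      ((posSemidef_bmat hH hσ hmin hβ).smul (by norm_num)).conjTranspose_mul_mul_same E
  refine ⟨_, C a * X ^ 2 + C (b - a * ρ) * X + C (-(b * ρ)), C c * X + C (-(c * ρ)),
    isHermitian_iff_isSymm.mp hX.isHermitian, hX, degree_quadratic_le, degree_linear_le,
    fun s => ?_⟩
  rw [mfun_sub_mfun hH, gradient_eq_zero hH hσ hmin hβ, zero_dotProduct, zero_add, hR,
    dotProduct_transpose_mul_mul_mulVec, shiftMatrix_mulVec_cons_one, smul_mulVec,
    dotProduct_smul, smul_eq_mul]
  simp only [eval_add, eval_mul, eval_pow, eval_C, eval_X]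
  ring
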